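/- arXiv:1506.06528 — 3 statements merged into one kernel-verified Lean document; each statement's English description precedes it below -/
import Mathlib

section
/- Let 𝔾 = (I,Δ) be a discrete quantum semigroup and 𝔪 a right invariant mean for 𝔾. Then for every f ∈ F_{b:1}(𝔾×𝔾), one has (𝔪 ⊗̃ id ⊗̃ id)((Δ ⊗̃ id)(f)) = 1 ⊗ [(𝔪 ⊗̃ id)(f)]; that is, for all β,γ ∈ I, [(𝔪 ⊗̃ id ⊗̃ id)((Δ ⊗̃ id)(f))](β,γ) = 1_{n(β)} ⊗ [(𝔪 ⊗̃ id)(f)](γ). -/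
open scoped Matrix.Norms.L2Operator Kronecker ComplexOrder

namespace DQSG

/-- The matrix algebra `M_k(ℂ)`. -/
abbrev Mat (k : ℕ) : Type := Matrix (Fin k) (Fin k) ℂ

/-- `M_k(ℂ) ⊗ M_l(ℂ)`, realized as matrices indexed by `Fin k × Fin l`. -/
abbrev Mat2 (k l : ℕ) : Type := Matrix (Fin k × Fin l) (Fin k × Fin l) ℂ

/-- `M_k(ℂ) ⊗ M_l(ℂ) ⊗ M_p(ℂ)`. -/
abbrev Mat3 (k l p : ℕ) : Type :=
  Matrix (Fin k × Fin l × Fin p) (Fin k × Fin l × Fin p) ℂ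

/-- The function algebra `F(I)` of an index system `(I, n)`. -/
abbrev FI {I : Type*} (n : I → ℕ) : Type _ := ∀ γ : I, Mat (n γ)

/-- The function algebra `F(I × J)`. -/
abbrev FI2 {I J : Type*} (n : I → ℕ) (m : J → ℕ) : Type _ :=
  ∀ (α : I) (β : J), Mat2 (n α) (m β)

/-- The function algebra `F(I × J × K)`. -/
abbrev FI3 {I J K : Type*} (n : I → ℕ) (m : J → ℕ) (p : K → ℕ) : Type _ :=
  ∀ (α : I) (β : J) (γ : K), Mat3 (n α) (m β) (p γ)

/-- The subspace `F_b(I)` of bounded functions in `F(I)` (w.r.t. the operator norm). -/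
noncomputable def Fb {I : Type*} (n : I → ℕ) : Submodule ℂ (FI n) where
  carrier := {f | ∃ C : ℝ, ∀ γ, ‖f γ‖ ≤ C}
  zero_mem' := ⟨0, fun γ => by simp⟩
  add_mem' := by
    rintro f g ⟨C, hC⟩ ⟨D, hD⟩
    exact ⟨C + D, fun γ => (norm_add_le _ _).trans (add_le_add (hC γ) (hD γ))⟩
  smul_mem' := by
    rintro c f ⟨C, hC⟩
    exact ⟨‖c‖ * C, fun γ => by
      rw [Pi.smul_apply, norm_smul]
      exact mul_le_mul_of_nonneg_left (hC γ) (norm_nonneg c)⟩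

/-- `F_{b:1}(I × J)`: functions bounded in the first variable, for each fixed
second variable. -/
def Fb1 {I J : Type*} {n : I → ℕ} {m : J → ℕ} (f : FI2 n m) : Prop :=
  ∀ β : J, ∃ C : ℝ, ∀ α : I, ‖f α β‖ ≤ C

/-- `F_{b:2}(I × J)`: functions bounded in the second variable, for each fixed
first variable. -/
def Fb2 {I J : Type*} {n : I → ℕ} {m : J → ℕ} (f : FI2 n m) : Prop :=
  ∀ α : I, ∃ C : ℝ, ∀ β : J, ‖f α β‖ ≤ C

/-- The slice `f_β^{ij} ∈ F(I)` of `f ∈ F(I × J)`,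
so that `f(α,β) = Σ_{i,j} f_β^{ij}(α) ⊗ e_β^{ij}`. -/
def slice2 {I J : Type*} {n : I → ℕ} {m : J → ℕ} (f : FI2 n m) (β : J)
    (i j : Fin (m β)) : FI n :=
  fun α => Matrix.of fun k l => f α β (k, i) (l, j)

/-- The slice `f_β^{ij} ∈ F(I)` of `f ∈ F(J × I)`,
so that `f(β,α) = Σ_{i,j} e_β^{ij} ⊗ f_β^{ij}(α)`. -/
def slice1 {I J : Type*} {n : I → ℕ} {m : J → ℕ} (f : FI2 m n) (β : J)
    (i j : Fin (m β)) : FI n :=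
  fun α => Matrix.of fun k l => f β α (i, k) (j, l)

/-- `T ⊗̃ id : F(I × J) → F(I' × J)` for a map `T : F(I) → F(I')`. -/
def tenR {I I' J : Type*} {n : I → ℕ} {n' : I' → ℕ} {m : J → ℕ}
    (T : FI n → FI n') (f : FI2 n m) : FI2 n' m :=
  fun α' β => Matrix.of fun u v => T (slice2 f β u.2 v.2) α' u.1 v.1

/-- `id ⊗̃ T : F(J × I) → F(J × I')` for a map `T : F(I) → F(I')`. -/
def tenL {I I' J : Type*} {n : I → ℕ} {n' : I' → ℕ} {m : J → ℕ}
    (T : FI n → FI n') (f : FI2 m n) : FI2 m n' :=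
  fun β α' => Matrix.of fun u v => T (slice1 f β u.1 v.1) α' u.2 v.2

/-- `T ⊗̃ id : F(I × J) → F(I₁ × I₂ × J)` for a map `T : F(I) → F(I₁ × I₂)`. -/
def tenR2 {I I₁ I₂ J : Type*} {n : I → ℕ} {n₁ : I₁ → ℕ} {n₂ : I₂ → ℕ} {m : J → ℕ}
    (T : FI n → FI2 n₁ n₂) (f : FI2 n m) : FI3 n₁ n₂ m :=
  fun β₁ β₂ γ => Matrix.of fun u v =>
    T (slice2 f γ u.2.2 v.2.2) β₁ β₂ (u.1, u.2.1) (v.1, v.2.1)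

/-- `id ⊗̃ T : F(J × I) → F(J × I₁ × I₂)` for a map `T : F(I) → F(I₁ × I₂)`. -/
def tenL2 {I I₁ I₂ J : Type*} {n : I → ℕ} {n₁ : I₁ → ℕ} {n₂ : I₂ → ℕ} {m : J → ℕ}
    (T : FI n → FI2 n₁ n₂) (f : FI2 m n) : FI3 m n₁ n₂ :=
  fun γ β₁ β₂ => Matrix.of fun u v =>
    T (slice1 f γ u.1 v.1) β₁ β₂ u.2 v.2

open scoped Classical in
/-- Apply a functional defined on `F_b(I)` to an arbitrary element of `F(I)`,
extended by `0` off `F_b(I)`. -/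
noncomputable def apF {I : Type*} {n : I → ℕ} (𝔪 : Fb n →ₗ[ℂ] ℂ) (g : FI n) : ℂ :=
  if h : g ∈ Fb n then 𝔪 ⟨g, h⟩ else 0

/-- `𝔪 ⊗̃ id : F(I × J) → F(J)` for a functional `𝔪` on `F_b(I)`. -/
noncomputable def fTenR {I J : Type*} {n : I → ℕ} {m : J → ℕ}
    (𝔪 : Fb n →ₗ[ℂ] ℂ) (f : FI2 n m) : FI m :=
  fun β => Matrix.of fun i j => apF 𝔪 (slice2 f β i j)

/-- `id ⊗̃ 𝔪 : F(J × I) → F(J)` for a functional `𝔪` on `F_b(I)`. -/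
noncomputable def fTenL {I J : Type*} {n : I → ℕ} {m : J → ℕ}
    (𝔪 : Fb n →ₗ[ℂ] ℂ) (f : FI2 m n) : FI m :=
  fun β => Matrix.of fun i j => apF 𝔪 (slice1 f β i j)

/-- `𝔪 ⊗̃ id ⊗̃ id : F(I × J × K) → F(J × K)` for a functional `𝔪` on `F_b(I)`. -/
noncomputable def fTenR3 {I J K : Type*} {n : I → ℕ} {m : J → ℕ} {p : K → ℕ}
    (𝔪 : Fb n →ₗ[ℂ] ℂ) (f : FI3 n m p) : FI2 m p :=
  fun β γ => Matrix.of fun u v =>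
    apF 𝔪 (fun α => Matrix.of fun k l => f α β γ (k, u) (l, v))

/-- A state on the C*-algebra `F_b(I)`: a positive linear functional with `𝔪(1) = 1`. -/
def IsState {I : Type*} {n : I → ℕ} (𝔪 : Fb n →ₗ[ℂ] ℂ) : Prop :=
  (∀ g : FI n, g ∈ Fb n → 0 ≤ apF 𝔪 (star g * g)) ∧ apF 𝔪 1 = 1

/-- A comultiplication on the index system `(I, n)`, i.e. the structure of a
discrete quantum semigroup. `D α β γ` is the *-homomorphism
`Δ^α_{β,γ} : M_{n(α)} → M_{n(β)} ⊗ M_{n(γ)}`. -/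
structure Comul {I : Type*} (n : I → ℕ) where
  /-- the family of *-homomorphisms `Δ^α_{β,γ}` -/
  D : ∀ α β γ : I, Mat (n α) → Mat2 (n β) (n γ)
  linear : ∀ α β γ, IsLinearMap ℂ (D α β γ)
  map_mul' : ∀ α β γ x y, D α β γ (x * y) = D α β γ x * D α β γ y
  map_star' : ∀ α β γ x, D α β γ (star x) = star (D α β γ x)
  /-- condition (i): `Δ^α_{β,γ}(1) Δ^{α'}_{β,γ}(1) = 0` for `α ≠ α'` -/
  orth : ∀ β γ α α' : I, α ≠ α' → D α β γ 1 * D α' β γ 1 = 0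
  /-- for fixed `β, γ` only finitely many `Δ^α_{β,γ}` are nonzero
  (a consequence of condition (i), included as data) -/
  finite : ∀ β γ : I, {α : I | D α β γ ≠ 0}.Finite
  /-- condition (ii): coassociativity
  `Σ_ω (Δ^ω_{α,β} ⊗ id) ∘ Δ^λ_{ω,γ} = Σ_ω (id ⊗ Δ^ω_{β,γ}) ∘ Δ^λ_{α,ω}`,
  written entrywise. -/
  coassoc : ∀ (lam α β γ : I) (x : Mat (n lam)) (p p' : Fin (n α))
      (q q' : Fin (n β)) (r r' : Fin (n γ)),
      ∑ᶠ ω : I, D ω α β (Matrix.of fun k l => D lam ω γ x (k, r) (l, r')) (p, q) (p', q')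
        = ∑ᶠ ω : I, D ω β γ (Matrix.of fun k l => D lam α ω x (p, k) (p', l)) (q, r) (q', r')

/-- The induced *-homomorphism `Δ : F(I) → F(I × I)`,
`[Δ(f)](β,γ) = Σ_α Δ^α_{β,γ}(f(α))`. -/
noncomputable def Comul.ind {I : Type*} {n : I → ℕ} (C : Comul n) (f : FI n) :
    FI2 n n :=
  fun β γ => ∑ᶠ α : I, C.D α β γ (f α)

/-- A right invariant mean for a discrete quantum semigroup: a state `𝔪` on
`F_b(𝔾)` with `(𝔪 ⊗̃ id)(Δ f) = 𝔪(f)·1` for all `f ∈ F_b(𝔾)`. -/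
def IsRIMean {I : Type*} {n : I → ℕ} (C : Comul n) (𝔪 : Fb n →ₗ[ℂ] ℂ) : Prop :=
  IsState 𝔪 ∧ ∀ f : FI n, f ∈ Fb n →
    fTenR 𝔪 (C.ind f) = fun γ => apF 𝔪 f • (1 : Mat (n γ))

/-- A left invariant mean for a discrete quantum semigroup: a state `𝔪` on
`F_b(𝔾)` with `(id ⊗̃ 𝔪)(Δ f) = 𝔪(f)·1` for all `f ∈ F_b(𝔾)`. -/
def IsLIMean {I : Type*} {n : I → ℕ} (C : Comul n) (𝔪 : Fb n →ₗ[ℂ] ℂ) : Prop :=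
  IsState 𝔪 ∧ ∀ f : FI n, f ∈ Fb n →
    fTenL 𝔪 (C.ind f) = fun γ => apF 𝔪 f • (1 : Mat (n γ))

/-- A *-homomorphism between function algebras: a linear, multiplicative,
star-preserving map. -/
def IsStarHom {I J : Type*} {n : I → ℕ} {m : J → ℕ} (T : FI n → FI m) : Prop :=
  IsLinearMap ℂ T ∧ (∀ f g, T (f * g) = T f * T g) ∧ ∀ f, T (star f) = star (T f)

open scoped Classical in
/-- Apply a map defined on `F_b(I)` to an arbitrary element of `F(I)`,
extended by `0` off `F_b(I)`. -/
noncomputable def apTb {I J : Type*} {n : I → ℕ} {m : J → ℕ}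
    (T : Fb n → FI m) (g : FI n) : FI m :=
  if h : g ∈ Fb n then T ⟨g, h⟩ else 0

/-- `T ⊗̃ id : F_{b:1}(I × J) → F(I' × J)` for a map `T` defined on `F_b(I)`. -/
noncomputable def tenRb {I I' J : Type*} {n : I → ℕ} {n' : I' → ℕ} {m : J → ℕ}
    (T : Fb n → FI n') (f : FI2 n m) : FI2 n' m :=
  fun α' β => Matrix.of fun u v => apTb T (slice2 f β u.2 v.2) α' u.1 v.1

open scoped Classical in
/-- The canonical embedding `I_α : M_{n(α)} → F(I)` as functions supported at `α`:
`emb α x` is the element of `F(I)` that is `x` at `α` and `0` elsewhere. -/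
noncomputable def emb {I : Type*} {n : I → ℕ} (α : I) (x : Mat (n α)) : FI n :=
  Function.update (0 : FI n) α x

/-- The canonical identification `ℂ = M_1(ℂ) → M_1(ℂ) ⊗ M_1(ℂ)` (the identity map). -/
def e11 : Mat 1 → Mat2 1 1 := fun x => Matrix.of fun u v => x u.1 v.1

/-- The C*-algebra `ℓ∞(G)` of bounded complex-valued functions on `G`,
as a subspace of all complex-valued functions. -/
noncomputable def Fbc (G : Type*) : Submodule ℂ (G → ℂ) where
  carrier := {f | ∃ C : ℝ, ∀ x, ‖f x‖ ≤ C}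
  zero_mem' := ⟨0, fun x => by simp⟩
  add_mem' := by
    rintro f g ⟨C, hC⟩ ⟨D, hD⟩
    exact ⟨C + D, fun x => (norm_add_le _ _).trans (add_le_add (hC x) (hD x))⟩
  smul_mem' := by
    rintro c f ⟨C, hC⟩
    exact ⟨‖c‖ * C, fun x => by
      rw [Pi.smul_apply, norm_smul]
      exact mul_le_mul_of_nonneg_left (hC x) (norm_nonneg c)⟩

open scoped Classical in
/-- Apply a functional defined on `ℓ∞(G)` to an arbitrary function,
extended by `0` off `ℓ∞(G)`. -/
noncomputable def apC {G : Type*} (m : Fbc G →ₗ[ℂ] ℂ) (g : G → ℂ) : ℂ :=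
  if h : g ∈ Fbc G then m ⟨g, h⟩ else 0

/-- A state on the C*-algebra `ℓ∞(G)`: a positive linear functional
taking the value `1` at the constant function `1`. -/
def IsCState {G : Type*} (m : Fbc G →ₗ[ℂ] ℂ) : Prop :=
  (∀ g : G → ℂ, g ∈ Fbc G → 0 ≤ apC m (star g * g)) ∧ apC m 1 = 1

end DQSG

/-! Entrywise, `(𝔪 ⊗̃ id ⊗̃ id)((Δ ⊗̃ id)(f))` at `((q, r), (q', r'))` is the `(q, q')` entry of
`(𝔪 ⊗̃ id)(Δ(f_γ^{rr'}))`. The slice `f_γ^{rr'}` is a compression of `f(·, γ)`, hence bounded, so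
right invariance turns this into `𝔪(f_γ^{rr'}) δ_{qq'}`. -/

namespace Matrix

open scoped Matrix

variable {𝕜 : Type*} [RCLike 𝕜] {m n m' n' : Type*} [Fintype m] [Fintype n] [Fintype m']
  [Fintype n'] [DecidableEq m] [DecidableEq n] [DecidableEq m'] [DecidableEq n']

lemma l2_opNorm_one_le : ‖(1 : Matrix m m 𝕜)‖ ≤ 1 := by
  rw [cstar_norm_def, map_one]
  exact ContinuousLinearMap.norm_id_le

lemma l2_opNorm_one_submatrix_le {e : m' → m} (he : Function.Injective e) :
    ‖(1 : Matrix m m 𝕜).submatrix e id‖ ≤ 1 := by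
  set S := (1 : Matrix m m 𝕜).submatrix e id
  have hSS : S * Sᴴ = 1 := by
    rw [conjTranspose_submatrix, conjTranspose_one,
      ← submatrix_mul _ _ _ _ _ Function.bijective_id, Matrix.one_mul, submatrix_one _ he]
  have hsq : ‖S‖ * ‖S‖ ≤ 1 := by
    rw [← l2_opNorm_conjTranspose S, ← l2_opNorm_conjTranspose_mul_self,
      conjTranspose_conjTranspose, hSS]
    exact l2_opNorm_one_le
  nlinarith [norm_nonneg S]

lemma l2_opNorm_submatrix_le (A : Matrix m n 𝕜) {e₁ : m' → m} {e₂ : n' → n}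
    (he₁ : Function.Injective e₁) (he₂ : Function.Injective e₂) :
    ‖A.submatrix e₁ e₂‖ ≤ ‖A‖ := by
  set S₁ := (1 : Matrix m m 𝕜).submatrix e₁ id
  set S₂ := (1 : Matrix n n 𝕜).submatrix e₂ id
  have hA : A.submatrix e₁ e₂ = S₁ * A * S₂ᴴ := by
    rw [conjTranspose_submatrix, conjTranspose_one, ← A.submatrix_id_id,
      ← submatrix_mul _ _ _ _ _ Function.bijective_id,
      ← submatrix_mul _ _ _ _ _ Function.bijective_id, Matrix.one_mul, Matrix.mul_one,
      submatrix_id_id]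
  calc ‖A.submatrix e₁ e₂‖ ≤ ‖S₁‖ * ‖A‖ * ‖S₂ᴴ‖ := by
        rw [hA]
        exact (l2_opNorm_mul _ _).trans
          (mul_le_mul_of_nonneg_right (l2_opNorm_mul _ _) (norm_nonneg _))
    _ ≤ 1 * ‖A‖ * 1 := by
        rw [l2_opNorm_conjTranspose]
        gcongr
        exacts [l2_opNorm_one_submatrix_le he₁, l2_opNorm_one_submatrix_le he₂]
    _ = ‖A‖ := by ring

end Matrix

namespace DQSG

section Slices

variable {I J : Type*} {n : I → ℕ} {m : J → ℕ}

lemma slice2_mem_Fb {f : FI2 n m} (hf : Fb1 f) (β : J) (i j : Fin (m β)) :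
    slice2 f β i j ∈ Fb n := by
  obtain ⟨c, hc⟩ := hf β
  exact ⟨c, fun α => (Matrix.l2_opNorm_submatrix_le (f α β)
    (Prod.mk_left_injective i) (Prod.mk_left_injective j)).trans (hc α)⟩

lemma fTenR3_tenR2 {I₁ I₂ : Type*} {n₁ : I₁ → ℕ} {n₂ : I₂ → ℕ} (𝔪 : Fb n₁ →ₗ[ℂ] ℂ)
    (T : FI n → FI2 n₁ n₂) (f : FI2 n m) :
    fTenR3 𝔪 (tenR2 T f) = tenR (fTenR 𝔪 ∘ T) f :=
  rfl

lemma tenR_apply_eq_one_kronecker {I' : Type*} {n' : I' → ℕ} {S : FI n → FI n'}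
    {f : FI2 n m} {φ : FI n → ℂ} {β : J}
    (hS : ∀ i j, S (slice2 f β i j) = fun α' => φ (slice2 f β i j) • (1 : Mat (n' α')))
    (α' : I') :
    tenR S f α' β = (1 : Mat (n' α')) ⊗ₖ Matrix.of fun i j => φ (slice2 f β i j) := by
  ext ⟨k, i⟩ ⟨l, j⟩
  simp only [tenR, Matrix.of_apply, hS, Matrix.smul_apply, smul_eq_mul,
    Matrix.kroneckerMap_apply]
  ring

end Slices

theorem stmt_2_general {I : Type*} (n : I → ℕ) (C : Comul n)
    (𝔪 : Fb n →ₗ[ℂ] ℂ) (h𝔪 : IsRIMean C 𝔪)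
    (f : FI2 n n) (hf : Fb1 f) :
    ∀ β γ : I, fTenR3 𝔪 (tenR2 C.ind f) β γ
      = (1 : Mat (n β)) ⊗ₖ fTenR 𝔪 f γ := by
  intro β γ
  rw [fTenR3_tenR2]
  exact tenR_apply_eq_one_kronecker (fun i j => h𝔪.2 _ (slice2_mem_Fb hf γ i j)) β

/-- **Lemma 6.** For a right invariant mean `𝔪` on a discrete quantum semigroup and
`f ∈ F_{b:1}(𝔾 × 𝔾)`: `(𝔪 ⊗̃ id ⊗̃ id)((Δ ⊗̃ id)(f)) = 1 ⊗ (𝔪 ⊗̃ id)(f)`. -/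
theorem stmt_2 {I : Type*} (n : I → ℕ) (hn : ∀ γ, 0 < n γ) (C : Comul n)
    (𝔪 : Fb n →ₗ[ℂ] ℂ) (h𝔪 : IsRIMean C 𝔪)
    (f : FI2 n n) (hf : Fb1 f) :
    ∀ β γ : I, fTenR3 𝔪 (tenR2 C.ind f) β γ
      = (1 : Mat (n β)) ⊗ₖ fTenR 𝔪 f γ :=
  stmt_2_general n C 𝔪 h𝔪 f hf

end DQSG
end

section
/- Let I, J, J' be index systems and T : F(I) → F(J) a *-homomorphism. If f ∈ F_{b:2}(I×J'), then (T ⊗̃ id)(f) ∈ F_{b:2}(J×J'). -/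
/-!
A *-homomorphism is positive, and so is its amplification `T ⊗ id` to `M_{n(α)} ⊗ M_N`.
If `‖f(α, c)‖ ≤ C(α)` for all `c`, then `C(α)² - f(α, c)* f(α, c) = z* z` in the C*-algebra
`M_{n(α)} ⊗ M_{m'(c)}`; applying `T ⊗ id` gives
`‖(T ⊗̃ id)(f)(β, c)‖² ≤ ‖T(C²)(β) ⊗ 1‖ ≤ ‖T(C)(β)‖²`, a bound independent of `c`.
-/

open scoped Matrix.Norms.L2Operator Kronecker ComplexOrder

open scoped MatrixOrder

section CStarAlgebra
variable {A : Type*} [CStarAlgebra A] [PartialOrder A] [StarOrderedRing A]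

lemma norm_sq_le_of_star_mul_self_add_eq {a z g : A} (h : star z * z + star a * a = g) :
    ‖a‖ ^ 2 ≤ ‖g‖ := by
  rw [sq, ← CStarRing.norm_star_mul_self, ← h]
  exact CStarAlgebra.norm_le_norm_of_nonneg_of_le (star_mul_self_nonneg a)
    (le_add_of_nonneg_left (star_mul_self_nonneg z))

lemma exists_star_mul_self_add_eq_of_norm_le {a : A} {r : ℝ} (ha : ‖a‖ ≤ r) :
    ∃ z : A, star z * z + star a * a = algebraMap ℝ A (r ^ 2) := by
  have hle : star a * a ≤ algebraMap ℝ A (r ^ 2) :=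
    CStarAlgebra.star_mul_le_algebraMap_norm_sq.trans
      (algebraMap_mono A (pow_le_pow_left₀ (norm_nonneg a) ha 2))
  obtain ⟨z, hz⟩ := CStarAlgebra.nonneg_iff_eq_star_mul_self.mp (sub_nonneg.mpr hle)
  exact ⟨z, by rw [← hz, sub_add_cancel]⟩

end CStarAlgebra

namespace Matrix
variable {ι κ : Type*} [Fintype ι] [DecidableEq ι] [Fintype κ] [DecidableEq κ]

lemma algebraMap_kronecker_one (r : ℝ) :
    algebraMap ℝ (Matrix ι ι ℂ) r ⊗ₖ (1 : Matrix κ κ ℂ) = algebraMap ℝ _ r := by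
  rw [Algebra.algebraMap_eq_smul_one, Algebra.algebraMap_eq_smul_one, smul_kronecker,
    one_kronecker_one]

lemma norm_kronecker_one_le_of_nonneg {W : Matrix ι ι ℂ} (hW : 0 ≤ W) :
    ‖W ⊗ₖ (1 : Matrix κ κ ℂ)‖ ≤ ‖W‖ := by
  have hW1 : 0 ≤ W ⊗ₖ (1 : Matrix κ κ ℂ) :=
    ((nonneg_iff_posSemidef.mp hW).kronecker PosSemidef.one).nonneg
  rw [CStarAlgebra.norm_le_iff_le_algebraMap _ (norm_nonneg W) hW1]
  have hgap : 0 ≤ algebraMap ℝ (Matrix ι ι ℂ) ‖W‖ - W :=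
    sub_nonneg.mpr IsSelfAdjoint.le_algebraMap_norm_self
  calc W ⊗ₖ (1 : Matrix κ κ ℂ)
      ≤ (algebraMap ℝ _ ‖W‖ - W) ⊗ₖ (1 : Matrix κ κ ℂ) + W ⊗ₖ 1 :=
        le_add_of_nonneg_left
          ((nonneg_iff_posSemidef.mp hgap).kronecker PosSemidef.one).nonneg
    _ = algebraMap ℝ _ ‖W‖ := by rw [← add_kronecker, sub_add_cancel, algebraMap_kronecker_one]

end Matrix

namespace DQSG

section BlockEntry
variable {I ι : Type*} {n : I → ℕ}

/-- The `(i, j)` block entry of a function with values in `M_{n(α)}(ℂ) ⊗ M_ι(ℂ)`: the element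
`F^{ij}` of `F(I)` with `F(α) = Σ_{i,j} F^{ij}(α) ⊗ e^{ij}`. -/
def blockEntry (F : ∀ α, Matrix (Fin (n α) × ι) (Fin (n α) × ι) ℂ) (i j : ι) : FI n :=
  fun α => Matrix.of fun k l => F α (k, i) (l, j)

variable (F G : ∀ α, Matrix (Fin (n α) × ι) (Fin (n α) × ι) ℂ) (i j : ι)

@[simp] lemma blockEntry_zero : blockEntry (0 : ∀ α, Matrix (Fin (n α) × ι) _ ℂ) i j = 0 := rfl

@[simp] lemma blockEntry_add : blockEntry (F + G) i j = blockEntry F i j + blockEntry G i j := rfl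

@[simp] lemma blockEntry_smul (c : ℂ) : blockEntry (c • F) i j = c • blockEntry F i j := rfl

lemma blockEntry_mul [Fintype ι] :
    blockEntry (F * G) i j = ∑ w : ι, blockEntry F i w * blockEntry G w j := by
  funext α; ext k l
  simp only [blockEntry, Pi.mul_apply, Matrix.mul_apply, Matrix.of_apply, Finset.sum_apply,
    Matrix.sum_apply, Fintype.sum_prod_type]
  exact Finset.sum_comm

lemma blockEntry_star : blockEntry (star F) i j = star (blockEntry F j i) := by
  funext α; ext k l
  simp [blockEntry, Matrix.star_apply]

lemma blockEntry_kronecker_one [DecidableEq ι] (x : FI n) :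
    blockEntry (fun α => x α ⊗ₖ (1 : Matrix ι ι ℂ)) i j = (1 : Matrix ι ι ℂ) i j • x := by
  funext α; ext k l
  simp [blockEntry, mul_comm]

end BlockEntry

namespace IsStarHom
variable {I J : Type*} {n : I → ℕ} {m : J → ℕ} {T : FI n → FI m}

def toStarAlgHom (hT : IsStarHom T) : FI n →⋆ₙₐ[ℂ] FI m where
  toFun := T
  map_smul' := hT.1.map_smul
  map_zero' := hT.1.map_zero
  map_add' := hT.1.map_add
  map_mul' := hT.2.1
  map_star' := hT.2.2

/-- The amplification `T ⊗ id` of `T` to functions with values in `M_{n(α)}(ℂ) ⊗ M_N(ℂ)`. -/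
def amplify (hT : IsStarHom T) (N : ℕ) :
    (∀ α, Mat2 (n α) N) →⋆ₙₐ[ℂ] ∀ β, Mat2 (m β) N where
  toFun F β := Matrix.of fun u v => hT.toStarAlgHom (blockEntry F u.2 v.2) β u.1 v.1
  map_smul' c F := by
    funext β; ext u v
    simp
  map_zero' := by
    funext β; ext u v
    simp
  map_add' F G := by
    funext β; ext u v
    simp
  map_mul' F G := by
    funext β; ext u v
    simp only [Matrix.of_apply, Pi.mul_apply, Matrix.mul_apply, Fintype.sum_prod_type,
      blockEntry_mul, map_sum, map_mul, Finset.sum_apply, Matrix.sum_apply]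
    exact Finset.sum_comm
  map_star' F := by
    funext β; ext u v
    simp only [Matrix.of_apply, Pi.star_apply, Matrix.star_apply, blockEntry_star, map_star]

lemma tenR_eq_amplify (hT : IsStarHom T) {J' : Type*} {m' : J' → ℕ} (f : FI2 n m') (β : J)
    (c : J') :
    tenR T f β c = hT.amplify (m' c) (fun α => f α c) β := rfl

lemma amplify_kronecker_one (hT : IsStarHom T) (N : ℕ) (x : FI n) :
    hT.amplify N (fun α => x α ⊗ₖ 1) = fun β => T x β ⊗ₖ 1 := by
  funext β; ext u v
  have hx := congrFun (hT.1.map_smul ((1 : Mat N) u.2 v.2) x) β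
  change T (blockEntry _ u.2 v.2) β u.1 v.1 = _
  rw [blockEntry_kronecker_one, hx]
  simp [mul_comm]

lemma norm_amplify_le (hT : IsStarHom T) {N : ℕ} (F : ∀ α, Mat2 (n α) N) (C : I → ℝ)
    (hF : ∀ α, ‖F α‖ ≤ C α) (β : J) :
    ‖hT.amplify N F β‖ ≤ ‖T (fun α => algebraMap ℝ (Mat (n α)) (C α)) β‖ := by
  set s : FI n := fun α => algebraMap ℝ (Mat (n α)) (C α)
  set W := T s β
  choose Z hZ using fun α => exists_star_mul_self_add_eq_of_norm_le (hF α)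
  have hs : (fun α => algebraMap ℝ (Mat2 (n α) N) (C α ^ 2)) =
      fun α => (star s * s) α ⊗ₖ 1 := by
    funext α
    rw [Pi.mul_apply, Pi.star_apply, ← algebraMap_star_comm, star_trivial, ← map_mul, ← sq,
      Matrix.algebraMap_kronecker_one]
  have hsum : star (hT.amplify N Z β) * hT.amplify N Z β
      + star (hT.amplify N F β) * hT.amplify N F β = (star W * W) ⊗ₖ 1 := by
    have hZ' : star Z * Z + star F * F = fun α => (star s * s) α ⊗ₖ 1 := (funext hZ).trans hs
    have h := congrArg (fun G => hT.amplify N G β) hZ'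
    simp only [map_add, map_mul, map_star, amplify_kronecker_one, hT.2.1, hT.2.2] at h
    exact h
  have hsq : ‖hT.amplify N F β‖ ^ 2 ≤ ‖W‖ ^ 2 :=
    calc ‖hT.amplify N F β‖ ^ 2 ≤ ‖(star W * W) ⊗ₖ (1 : Mat N)‖ :=
          norm_sq_le_of_star_mul_self_add_eq hsum
      _ ≤ ‖star W * W‖ := Matrix.norm_kronecker_one_le_of_nonneg (star_mul_self_nonneg W)
      _ = ‖W‖ ^ 2 := by rw [CStarRing.norm_star_mul_self, sq]
  exact (pow_le_pow_iff_left₀ (norm_nonneg _) (norm_nonneg _) two_ne_zero).mp hsq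

end IsStarHom

theorem stmt_5_general {I J J' : Type*} (n : I → ℕ) (m : J → ℕ) (m' : J' → ℕ)
    (T : FI n → FI m) (hT : IsStarHom T)
    (f : FI2 n m') (hf : Fb2 f) : Fb2 (tenR T f) := by
  intro β
  choose C hC using hf
  refine ⟨‖T (fun α => algebraMap ℝ (Mat (n α)) (C α)) β‖, fun c => ?_⟩
  rw [hT.tenR_eq_amplify]
  exact hT.norm_amplify_le (fun α => f α c) C (fun α => hC α c) β

/-- **(P5).** If `T : F(I) → F(J)` is a *-homomorphism and `f ∈ F_{b:2}(I × J')`,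
then `(T ⊗̃ id)(f) ∈ F_{b:2}(J × J')`. -/
theorem stmt_5 {I J J' : Type*} (n : I → ℕ) (m : J → ℕ) (m' : J' → ℕ)
    (hn : ∀ γ, 0 < n γ) (hm : ∀ γ, 0 < m γ) (hm' : ∀ γ, 0 < m' γ)
    (T : FI n → FI m) (hT : IsStarHom T)
    (f : FI2 n m') (hf : Fb2 f) : Fb2 (tenR T f) :=
  stmt_5_general n m m' T hT f hf

end DQSG
end

section
/- Let 𝔾 = (I,Δ) be a discrete quantum semigroup with n ≡ 1 (so each Δ^α_{β,γ} : ℂ → ℂ is either 0 or the identity), and suppose that for every pair (β,γ) ∈ I×I there exists α ∈ I with Δ^α_{β,γ} = id. Then such α is unique; denoting it β·γ, the binary operation (β,γ) ↦ β·γ is associative (so (I,·) is a semigroup), and the induced map satisfies [Δ(f)](β,γ) = f(β·γ) for all f ∈ F(I) and β,γ ∈ I. -/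
open scoped Matrix.Norms.L2Operator Kronecker ComplexOrder

namespace DQSG

/-!
With `n ≡ 1` each `Δ^α_{β,γ}` is `0` or the identity, and orthogonality of the units
`Δ^α_{β,γ}(1)` allows at most one `α` with `Δ^α_{β,γ} = id`. Hence
`Δ^α_{β,γ} = [α = β·γ]·id`, so `Δ(f)(β,γ) = f(β·γ)`, and evaluating coassociativity at
the unit of `M_1(ℂ)` over `λ = (a·b)·c` gives `1 = [(a·b)·c = a·(b·c)]`.
-/

theorem e11_one : e11 (1 : Mat 1) = 1 := by
  ext ⟨i, j⟩ ⟨k, l⟩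
  fin_cases i; fin_cases j; fin_cases k; fin_cases l
  rfl

namespace Comul

variable {I : Type*} (C : Comul (fun _ : I => 1))

theorem eq_of_D_eq_e11 {α α' β γ : I} (h : C.D α β γ = e11) (h' : C.D α' β γ = e11) :
    α = α' := by
  by_contra hne
  have horth := C.orth β γ α α' hne
  rw [h, h', e11_one, one_mul] at horth
  exact one_ne_zero horth

theorem D_eq_zero_of_ne {op : I → I → I}
    (h01 : ∀ α β γ : I, C.D α β γ = e11 ∨ C.D α β γ = 0)
    (hop : ∀ β γ : I, C.D (op β γ) β γ = e11) {α β γ : I} (hα : α ≠ op β γ) :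
    C.D α β γ = 0 :=
  (h01 α β γ).resolve_left fun h => hα (C.eq_of_D_eq_e11 h (hop β γ))

variable {C} {op : I → I → I}

theorem ind_apply (hop : ∀ β γ : I, C.D (op β γ) β γ = e11)
    (hzero : ∀ α β γ : I, α ≠ op β γ → C.D α β γ = 0)
    (f : FI (fun _ : I => 1)) (β γ : I) :
    C.ind f β γ = e11 (f (op β γ)) := by
  rw [ind, finsum_eq_single _ (op β γ) fun ω hω => by simp [hzero ω β γ hω], hop]

theorem op_assoc (hop : ∀ β γ : I, C.D (op β γ) β γ = e11)
    (hzero : ∀ α β γ : I, α ≠ op β γ → C.D α β γ = 0) (a b c : I) :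
    op (op a b) c = op a (op b c) := by
  have hcoassoc := C.coassoc (op (op a b) c) a b c 1 0 0 0 0 0 0
  rw [finsum_eq_single _ (op a b) fun ω hω => by simp [hzero ω a b hω],
    finsum_eq_single _ (op b c) fun ω hω => by simp [hzero ω b c hω]] at hcoassoc
  by_contra hne
  simp [hop, hzero _ a _ hne, e11] at hcoassoc

end Comul

/-- **Example 5 (converse).** A discrete quantum semigroup with `n ≡ 1` in which
every pair `(β,γ)` admits some `α` with `Δ^α_{β,γ} = id` comes from a semigroup:
such `α` is unique, the induced operation is associative, and `[Δ(f)](β,γ) = f(β·γ)`. -/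
theorem stmt_12 (I : Type*) (C : Comul (fun _ : I => 1))
    (h01 : ∀ α β γ : I, C.D α β γ = e11 ∨ C.D α β γ = 0)
    (hex : ∀ β γ : I, ∃ α : I, C.D α β γ = e11) :
    (∀ β γ α α' : I, C.D α β γ = e11 → C.D α' β γ = e11 → α = α') ∧
    ∃ op : I → I → I,
      (∀ β γ : I, C.D (op β γ) β γ = e11) ∧
      (∀ a b c : I, op (op a b) c = op a (op b c)) ∧
      ∀ (f : FI (fun _ : I => 1)) (β γ : I), C.ind f β γ = e11 (f (op β γ)) := by
  choose op hop using hex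
  have hzero : ∀ α β γ : I, α ≠ op β γ → C.D α β γ = 0 :=
    fun _ _ _ => C.D_eq_zero_of_ne h01 hop
  exact ⟨fun _ _ _ _ => C.eq_of_D_eq_e11, op, hop, Comul.op_assoc hop hzero,
    Comul.ind_apply hop hzero⟩

end DQSG
end
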